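/- Let R be a commutative unital ring and (A,F) a filtered cochain complex of R-modules. If (A,F) is cofibrant — i.e. the unique filtered map 0 → (A,F) has the left lifting property with respect to every morphism p of filtered cochain complexes such that each restriction F^k p is a degreewise surjective quasi-isomorphism — then F^kA^n is a projective R-module for every n ∈ ℤ and every k ∈ ℕ. -/

import Mathlib

open CategoryTheory Limits ZeroObject

noncomputable section

variable (R : Type) [CommRing R]

/-- The category of unbounded cochain complexes of `R`-modules. -/
abbrev Cx := CochainComplex (ModuleCat.{0} R) ℤ



/-- The underlying module of `D_R(n)` in degree `i`: it is (isomorphic to) `R` if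
`i = n` or `i = n+1`, and the zero module otherwise. -/
abbrev diskFun (n i : ℤ) : Type := PLift (i = n ∨ i = n + 1) → R

/-- The differential of the disk complex `D_R(n)`. -/
def diskD (n i j : ℤ) : (diskFun R n i) →ₗ[R] (diskFun R n j) where
  toFun f _ := if hij : i = n ∧ j = n + 1 then f ⟨Or.inl hij.1⟩ else 0
  map_add' f g := by
    funext h
    by_cases hij : i = n ∧ j = n + 1 <;> simp [hij]
  map_smul' r f := by
    funext h
    by_cases hij : i = n ∧ j = n + 1 <;> simp [hij]

lemma diskD_apply (n i j : ℤ) (f : diskFun R n i) (h : PLift (j = n ∨ j = n + 1)) :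
    diskD R n i j f h = if hij : i = n ∧ j = n + 1 then f ⟨Or.inl hij.1⟩ else 0 := rfl

/-- The disk complex `D_R(n)`, with `R` in degrees `n` and `n+1`, the identity as the only
non-trivial differential, and `0` elsewhere. -/
def disk (n : ℤ) : Cx R where
  X i := ModuleCat.of R (diskFun R n i)
  d i j := ModuleCat.ofHom (diskD R n i j)
  shape i j hij := by
    apply ModuleCat.hom_ext
    apply LinearMap.ext
    intro f
    funext h
    have hn : ¬ (i = n ∧ j = n + 1) := by
      rintro ⟨rfl, rfl⟩
      exact hij rfl
    show diskD R n i j f h = _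
    rw [diskD_apply, dif_neg hn]
    rfl
  d_comp_d' i j k _ _ := by
    apply ModuleCat.hom_ext
    apply LinearMap.ext
    intro f
    funext h
    show diskD R n j k (diskD R n i j f) h = _
    rw [diskD_apply]
    split_ifs with hjk
    · rw [diskD_apply]
      have hn : ¬ (i = n ∧ j = n + 1) := by
        obtain ⟨h1, h2⟩ := hjk
        rintro ⟨rfl, h3⟩
        omega
      rw [dif_neg hn]
      rfl
    · rfl

/-- The underlying module of `S_R(n)` in degree `i`. -/
abbrev sphereFun (n i : ℤ) : Type := PLift (i = n) → R

/-- The sphere complex `S_R(n)`, with `R` in degree `n` and `0` elsewhere. -/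
def sphere (n : ℤ) : Cx R where
  X i := ModuleCat.of R (sphereFun R n i)
  d _ _ := 0
  shape _ _ _ := rfl
  d_comp_d' := by intros; simp

/-- The degreewise component of the map `S_R(n+1) ⟶ D_R(n)`. -/
def sphereToDiskHom (n i : ℤ) : (sphereFun R (n + 1) i) →ₗ[R] (diskFun R n i) where
  toFun g _ := if hi : i = n + 1 then g ⟨hi⟩ else 0
  map_add' g₁ g₂ := by
    funext h
    by_cases hi : i = n + 1 <;> simp [hi]
  map_smul' r g := by
    funext h
    by_cases hi : i = n + 1 <;> simp [hi]

lemma sphereToDiskHom_apply (n i : ℤ) (g : sphereFun R (n + 1) i)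
    (h : PLift (i = n ∨ i = n + 1)) :
    sphereToDiskHom R n i g h = if hi : i = n + 1 then g ⟨hi⟩ else 0 := rfl

/-- The map `S_R(n+1) ⟶ D_R(n)` which is the identity of `R` in degree `n+1`. -/
def sphereToDisk (n : ℤ) : sphere R (n + 1) ⟶ disk R n where
  f i := ModuleCat.ofHom (sphereToDiskHom R n i)
  comm' i j _ := by
    apply ModuleCat.hom_ext
    apply LinearMap.ext
    intro g
    funext h
    show diskD R n i j (sphereToDiskHom R n i g) h = sphereToDiskHom R n j ((0 : _ →ₗ[R] _) g) h
    simp only [LinearMap.zero_apply, map_zero, Pi.zero_apply]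
    rw [diskD_apply]
    split_ifs with hij
    · show (if hi : i = n + 1 then g ⟨hi⟩ else 0) = _
      have hn : ¬ i = n + 1 := by
        obtain ⟨h1, h2⟩ := hij
        omega
      rw [dif_neg hn]
    · rfl

/-- A map of cochain complexes is degreewise surjective if it is surjective in each degree. -/
def DegSurj {M N : Cx R} (p : M ⟶ N) : Prop := ∀ n : ℤ, Function.Surjective (p.f n)


/-- A filtered cochain complex of `R`-modules: a cochain complex `C` together with a
decreasing `ℕ`-indexed filtration by subcomplexes `C = F⁰C ⊇ F¹C ⊇ F²C ⊇ ⋯`. -/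
structure FCx where
  /-- the underlying cochain complex -/
  C : Cx R
  /-- the filtration, given degreewise by submodules -/
  F : ℕ → ∀ i : ℤ, Submodule R (C.X i)
  /-- the filtration is decreasing -/
  antitone : ∀ p q : ℕ, p ≤ q → ∀ i : ℤ, F q i ≤ F p i
  /-- `F⁰C = C` -/
  zero_top : ∀ i : ℤ, F 0 i = ⊤
  /-- each filtration level is a subcomplex -/
  d_stable : ∀ (p : ℕ) (i j : ℤ), ∀ x ∈ F p i, C.d i j x ∈ F p j

/-- A morphism of filtered cochain complexes: a cochain map preserving the filtrations. -/
@[ext]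
structure FHom (M N : FCx R) where
  /-- the underlying cochain map -/
  φ : M.C ⟶ N.C
  /-- compatibility with the filtrations -/
  preserves : ∀ (p : ℕ) (i : ℤ), ∀ x ∈ M.F p i, φ.f i x ∈ N.F p i

/-- The category of filtered cochain complexes of `R`-modules. -/
instance : Category (FCx R) where
  Hom M N := FHom R M N
  id M := ⟨𝟙 M.C, fun p i x hx => by simpa using hx⟩
  comp f g := ⟨f.φ ≫ g.φ, fun p i x hx => by
    have h1 := f.preserves p i x hx
    have h2 := g.preserves p i _ h1
    simpa using h2⟩
  id_comp f := by apply FHom.ext; simp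
  comp_id f := by apply FHom.ext; simp
  assoc f g h := by apply FHom.ext; simp

@[simp] lemma comp_φ {M N P : FCx R} (f : M ⟶ N) (g : N ⟶ P) :
    (f ≫ g).φ = f.φ ≫ g.φ := rfl

/-- The `p`-th level `F^p M` of the filtration, as a cochain complex. -/
def FCx.level {R : Type} [CommRing R] (M : FCx R) (p : ℕ) : Cx R where
  X i := ModuleCat.of R (M.F p i)
  d i j := ModuleCat.ofHom (LinearMap.restrict (M.C.d i j).hom (fun x hx => M.d_stable p i j x hx))
  shape i j hij := by
    apply ModuleCat.hom_ext
    apply LinearMap.ext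
    intro x
    apply Subtype.ext
    show M.C.d i j x.1 = _
    rw [M.C.shape i j hij]
    rfl
  d_comp_d' i j k _ _ := by
    apply ModuleCat.hom_ext
    apply LinearMap.ext
    intro x
    apply Subtype.ext
    show M.C.d j k (M.C.d i j x.1) = _
    have h0 : M.C.d i j ≫ M.C.d j k = 0 := M.C.d_comp_d i j k
    have h1 : M.C.d j k (M.C.d i j x.1) = (M.C.d i j ≫ M.C.d j k) x.1 := rfl
    rw [h1, h0]
    rfl

/-- The restriction `F^p f : F^p M ⟶ F^p N` of a filtered morphism to the `p`-th filtration
levels. -/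
def levelMap {R : Type} [CommRing R] {M N : FCx R} (f : M ⟶ N) (p : ℕ) :
    M.level p ⟶ N.level p where
  f i := ModuleCat.ofHom (LinearMap.restrict (f.φ.f i).hom (fun x hx => f.preserves p i x hx))
  comm' i j _ := by
    apply ModuleCat.hom_ext
    apply LinearMap.ext
    intro x
    apply Subtype.ext
    show N.C.d i j (f.φ.f i x.1) = f.φ.f j (M.C.d i j x.1)
    have h : (f.φ.f i ≫ N.C.d i j) x.1 = (M.C.d i j ≫ f.φ.f j) x.1 := by
      rw [f.φ.comm i j]
    exact h

/-- A filtered morphism is a (projective) fibration if each `F^p f` is degreewise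
surjective. -/
def FFib {M N : FCx R} (f : M ⟶ N) : Prop :=
  ∀ (p : ℕ) (i : ℤ), Function.Surjective ((levelMap f p).f i)

/-- A filtered morphism is a filtered weak equivalence if each `F^p f` is a
quasi-isomorphism, i.e. `H^n (F^p f)` is an isomorphism for all `n` and `p`. -/
def FWeq {M N : FCx R} (f : M ⟶ N) : Prop :=
  ∀ p : ℕ, QuasiIso (levelMap f p)

/-- The filtered disk `D_R(n,p)`: the complex `D_R(n)` with filtration which is everything
in filtration degrees `k ≤ p` and zero above. -/
def fdisk (n : ℤ) (p : ℕ) : FCx R where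
  C := disk R n
  F k _ := if k ≤ p then ⊤ else ⊥
  antitone a b hab i := by
    by_cases hb : b ≤ p
    · have ha : a ≤ p := le_trans hab hb
      simp [ha, hb]
    · simp [hb]
  zero_top i := by simp
  d_stable k i j x hx := by
    by_cases hk : k ≤ p
    · simp [hk]
    · simp only [if_neg hk, Submodule.mem_bot] at hx ⊢
      rw [hx]
      exact map_zero _

/-- The filtered sphere `S_R(n,p)`. -/
def fsphere (n : ℤ) (p : ℕ) : FCx R where
  C := sphere R n
  F k _ := if k ≤ p then ⊤ else ⊥
  antitone a b hab i := by
    by_cases hb : b ≤ p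
    · have ha : a ≤ p := le_trans hab hb
      simp [ha, hb]
    · simp [hb]
  zero_top i := by simp
  d_stable k i j x hx := by
    by_cases hk : k ≤ p
    · simp [hk]
    · simp only [if_neg hk, Submodule.mem_bot] at hx ⊢
      rw [hx]
      exact map_zero _

/-- The filtered map `S_R(n+1,p) ⟶ D_R(n,p)`. -/
def fsphereToDisk (n : ℤ) (p : ℕ) : fsphere R (n + 1) p ⟶ fdisk R n p where
  φ := sphereToDisk R n
  preserves k i x hx := by
    by_cases hk : k ≤ p
    · show _ ∈ (if k ≤ p then ⊤ else ⊥ : Submodule R ((disk R n).X i))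
      rw [if_pos hk]
      exact Submodule.mem_top
    · show _ ∈ (if k ≤ p then ⊤ else ⊥ : Submodule R ((disk R n).X i))
      rw [if_neg hk]
      replace hx : x = 0 := by
        have hx' : x ∈ (if k ≤ p then ⊤ else ⊥ : Submodule R ((sphere R (n + 1)).X i)) := hx
        rw [if_neg hk] at hx'
        exact (Submodule.mem_bot R).1 hx'
      refine (Submodule.mem_bot R).2 ?_
      rw [hx]
      exact map_zero _

/-- The zero filtered complex. -/
def fzero : FCx R where
  C := 0
  F _ _ := ⊤
  antitone _ _ _ _ := le_refl _
  zero_top _ := rfl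
  d_stable _ _ _ _ _ := Submodule.mem_top

/-- The unique (zero) filtered map from the zero filtered complex. -/
def fromFZero (M : FCx R) : fzero R ⟶ M where
  φ := 0
  preserves p i x _ := by
    have h : ((0 : (fzero R).C ⟶ M.C).f i) x = 0 := by
      rw [HomologicalComplex.zero_f]
      rfl
    rw [h]
    exact (M.F p i).zero_mem


/-- `f` is a retract of `g` in the arrow category: there are morphisms of arrows
`f → g → f` composing to the identity of `f`. -/
def IsRetractOf {C : Type 1} [Category.{0} C] {X Y X' Y' : C} (f : X ⟶ Y) (g : X' ⟶ Y') : Prop :=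
  ∃ (i : Arrow.mk f ⟶ Arrow.mk g) (r : Arrow.mk g ⟶ Arrow.mk f), i ≫ r = 𝟙 (Arrow.mk f)

/-- A cochain complex `A` is cofibrant if `0 ⟶ A` has the left lifting property with respect
to every degreewise surjective quasi-isomorphism. -/
def Cofibrant (A : Cx R) : Prop :=
  ∀ {X Y : Cx R} (p : X ⟶ Y), (∀ n : ℤ, Function.Surjective (p.f n)) → QuasiIso p →
    HasLiftingProperty (0 : (0 : Cx R) ⟶ A) p

/-- A filtered morphism is a cofibration if it has the left lifting property with respect to
every filtered trivial fibration, i.e. every filtered morphism which is in each filtration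
level a degreewise surjective quasi-isomorphism. -/
def FCofib {M N : FCx R} (i : M ⟶ N) : Prop :=
  ∀ {X Y : FCx R} (p : X ⟶ Y), FFib R p → FWeq R p → HasLiftingProperty i p

/-- A filtered complex `A` is cofibrant if `0 ⟶ A` has the left lifting property with
respect to every filtered trivial fibration. -/
def FCofibrant (A : FCx R) : Prop :=
  ∀ {X Y : FCx R} (p : X ⟶ Y), FFib R p → FWeq R p → HasLiftingProperty (fromFZero R A) p

/-!
Fix a degree `i`. Let `P` be the free module on the pairs `(k, a)` with `a ∈ F^k A^i`, filtered
by the spans of the generators of index `≥ k`: each `F^k P` is free and `P → A^i` maps `F^k P`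
onto `F^k A^i`. On filtered disks in degrees `i - 1, i` this gives a filtered trivial fibration
`D(P) → D(A^i)`, because every filtration level of a disk is acyclic. Lifting against it the
filtered map `A → D(A^i)`, which is `d` in degree `i - 1` and the identity in degree `i`,
exhibits `F^k A^i` as a retract of `F^k P`.
-/

section

variable {R}

section ModuleDisk

abbrev moduleDiskFun (M : Type) (n j : ℤ) : Type := PLift (j = n ∨ j = n + 1) → M

variable {M : Type} [AddCommGroup M] [Module R M]

def moduleDiskD (n j j' : ℤ) : moduleDiskFun M n j →ₗ[R] moduleDiskFun M n j' where
  toFun w _ := if h : j = n ∧ j' = n + 1 then w ⟨Or.inl h.1⟩ else 0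
  map_add' w₁ w₂ := by
    funext
    split_ifs <;> simp
  map_smul' r w := by
    funext
    split_ifs <;> simp

lemma moduleDiskD_apply (n j j' : ℤ) (w : moduleDiskFun M n j)
    (h : PLift (j' = n ∨ j' = n + 1)) :
    moduleDiskD (R := R) n j j' w h = if h : j = n ∧ j' = n + 1 then w ⟨Or.inl h.1⟩ else 0 :=
  rfl

variable (R M) in
def moduleDisk (n : ℤ) : Cx R where
  X j := ModuleCat.of R (moduleDiskFun M n j)
  d j j' := ModuleCat.ofHom (moduleDiskD n j j')
  shape j j' hjj' := by
    ext w h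
    have : ¬ (j = n ∧ j' = n + 1) := fun ⟨h₁, h₂⟩ => hjj' (by simp; omega)
    exact dif_neg this
  d_comp_d' j j' j'' _ _ := by
    refine ModuleCat.hom_ext (LinearMap.ext fun w => funext fun h => ?_)
    show moduleDiskD (R := R) n j' j'' (moduleDiskD n j j' w) h = 0
    rw [moduleDiskD_apply]
    split_ifs with h'
    · exact dif_neg (by omega)
    · rfl

end ModuleDisk

section FilteredModuleDisk

variable {M N : Type} [AddCommGroup M] [Module R M] [AddCommGroup N] [Module R N]
  {F : ℕ → Submodule R M} {G : ℕ → Submodule R N}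

variable (F) in
def filteredModuleDisk (hF : Antitone F) (hF0 : F 0 = ⊤) (n : ℤ) : FCx R where
  C := moduleDisk R M n
  F k _ := Submodule.pi Set.univ fun _ => F k
  antitone _ _ hpq _ _ hw h _ := hF hpq (hw h trivial)
  zero_top _ := by rw [hF0]; exact Submodule.pi_top _
  d_stable k j j' w hw h _ := by
    show (if h' : j = n ∧ j' = n + 1 then w ⟨Or.inl h'.1⟩ else 0) ∈ F k
    split_ifs
    · exact hw _ trivial
    · exact zero_mem _

def filteredModuleDiskMap {hF : Antitone F} {hF0 : F 0 = ⊤} {hG : Antitone G} {hG0 : G 0 = ⊤}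
    (f : M →ₗ[R] N) (hf : ∀ k, Set.MapsTo f (F k) (G k)) (n : ℤ) :
    filteredModuleDisk F hF hF0 n ⟶ filteredModuleDisk G hG hG0 n where
  φ :=
    { f _ := ModuleCat.ofHom (f.compLeft _)
      comm' j j' _ := by
        refine ModuleCat.hom_ext (LinearMap.ext fun w => funext fun h => ?_)
        show (if h' : j = n ∧ j' = n + 1 then f (w ⟨Or.inl h'.1⟩) else 0) =
          f (if h' : j = n ∧ j' = n + 1 then w ⟨Or.inl h'.1⟩ else 0)
        split_ifs <;> simp }
  preserves k _ w hw h _ := hf k (hw h trivial)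

variable {hF : Antitone F} {hF0 : F 0 = ⊤} {hG : Antitone G} {hG0 : G 0 = ⊤}

lemma filteredModuleDisk_level_exactAt (n : ℤ) (k : ℕ) (j : ℤ) :
    ((filteredModuleDisk F hF hF0 n).level k).ExactAt j := by
  rw [HomologicalComplex.exactAt_iff' _ (j - 1) j (j + 1) (by simp) (by simp),
    ShortComplex.moduleCat_exact_iff]
  intro w hw
  by_cases hj : j = n + 1
  · refine ⟨⟨fun _ => w.1 ⟨Or.inr hj⟩, fun _ _ => w.2 _ trivial⟩,
      Subtype.ext (funext fun h => ?_)⟩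
    show (if h' : j - 1 = n ∧ j = n + 1 then w.1 ⟨Or.inr hj⟩ else 0) = w.1 h
    rw [dif_pos ⟨by omega, hj⟩]
  · refine ⟨0, ?_⟩
    rw [map_zero]
    refine Subtype.ext (funext fun h => ?_)
    have hjn : j = n := h.down.resolve_right hj
    have hw' : (if h' : j = n ∧ j + 1 = n + 1 then w.1 ⟨Or.inl h'.1⟩ else 0) = 0 :=
      congrFun (congrArg Subtype.val hw) ⟨Or.inr (by omega)⟩
    rw [dif_pos ⟨hjn, by omega⟩] at hw'
    exact hw'.symm

lemma fWeq_filteredModuleDiskMap (f : M →ₗ[R] N) (hf : ∀ k, Set.MapsTo f (F k) (G k))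
    (n : ℤ) :
    FWeq R (filteredModuleDiskMap (hF := hF) (hF0 := hF0) (hG := hG) (hG0 := hG0) f hf n) :=
  fun k => (quasiIso_iff _).2 fun j =>
    (quasiIsoAt_iff_exactAt _ j (filteredModuleDisk_level_exactAt n k j)).2
      (filteredModuleDisk_level_exactAt n k j)

lemma fFib_filteredModuleDiskMap (f : M →ₗ[R] N) (hf : ∀ k, Set.MapsTo f (F k) (G k))
    (hf' : ∀ k, Set.SurjOn f (F k) (G k)) (n : ℤ) :
    FFib R (filteredModuleDiskMap (hF := hF) (hF0 := hF0) (hG := hG) (hG0 := hG0) f hf n) := by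
  rintro k j ⟨w, hw⟩
  choose v hv hfv using fun h => hf' k (hw h trivial)
  exact ⟨⟨v, fun h _ => hv h⟩, Subtype.ext (funext hfv)⟩

end FilteredModuleDisk

section FreeCover

variable {M : Type} [AddCommGroup M] [Module R M] (F : ℕ → Submodule R M)

abbrev freeCover : Type := (Σ k, F k) →₀ R

def freeCoverFiltration (k : ℕ) : Submodule R (freeCover F) :=
  Finsupp.supported R R {x | k ≤ x.1}

def freeCoverMap : freeCover F →ₗ[R] M :=
  Finsupp.linearCombination R fun x => (x.2 : M)

lemma freeCoverFiltration_antitone : Antitone (freeCoverFiltration F) :=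
  fun _ _ hpq => Finsupp.supported_mono fun _ hx => le_trans hpq hx

lemma freeCoverFiltration_zero : freeCoverFiltration F 0 = ⊤ := by
  simp only [freeCoverFiltration, zero_le, Set.ofPred_true, Finsupp.supported_univ]

instance (k : ℕ) : Module.Projective R (freeCoverFiltration F k) :=
  .of_equiv (Finsupp.supportedEquivFinsupp _).symm

variable {F}

lemma mapsTo_freeCoverMap (hF : Antitone F) (k : ℕ) :
    Set.MapsTo (freeCoverMap F) (freeCoverFiltration F k) (F k) := by
  intro p hp
  rw [SetLike.mem_coe, freeCoverMap, Finsupp.linearCombination_apply]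
  exact Submodule.sum_mem _ fun x hx => Submodule.smul_mem _ _ (hF (hp hx) x.2.2)

lemma surjOn_freeCoverMap (k : ℕ) :
    Set.SurjOn (freeCoverMap F) (freeCoverFiltration F k) (F k) := fun a ha =>
  ⟨Finsupp.single ⟨k, ⟨a, ha⟩⟩ 1, Finsupp.single_mem_supported R 1 (le_refl k),
    by simp [freeCoverMap]⟩

end FreeCover

namespace FCx

variable (A : FCx R) (i : ℤ)

lemma antitone_F : Antitone (A.F · i) := fun _ _ hpq => A.antitone _ _ hpq i

abbrev degreeDisk : FCx R :=
  filteredModuleDisk (A.F · i) (A.antitone_F i) (A.zero_top i) (i - 1)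

def toDegree (j : ℤ) : A.C.X j ⟶ A.C.X i :=
  if h : j = i then (A.C.XIsoOfEq h).hom else A.C.d j i

@[simp] lemma toDegree_self : A.toDegree i i = 𝟙 _ := dif_pos rfl

lemma toDegree_of_ne {j : ℤ} (h : j ≠ i) : A.toDegree i j = A.C.d j i := dif_neg h

lemma toDegree_mem {k : ℕ} {j : ℤ} {a : A.C.X j} (ha : a ∈ A.F k j) :
    A.toDegree i j a ∈ A.F k i := by
  unfold toDegree
  split_ifs with h
  · subst h
    exact ha
  · exact A.d_stable k j i a ha

def toDegreeDisk : A ⟶ A.degreeDisk i where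
  φ :=
    { f j := ModuleCat.ofHom (LinearMap.pi fun _ => (A.toDegree i j).hom)
      comm' j j' hjj' := by
        refine ModuleCat.hom_ext (LinearMap.ext fun a => funext fun h => ?_)
        show (if h' : j = i - 1 ∧ j' = i - 1 + 1 then A.toDegree i j a else 0) =
          A.toDegree i j' (A.C.d j j' a)
        obtain rfl : j + 1 = j' := hjj'
        split_ifs with hj
        · obtain rfl : i = j + 1 := by omega
          rw [toDegree_self, toDegree_of_ne _ _ (by omega)]
          rfl
        · rw [toDegree_of_ne _ _ (by omega)]
          exact (congrArg (fun g => g.hom a) (A.C.d_comp_d j (j + 1) i)).symm }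
  preserves k j a ha _ _ := A.toDegree_mem i ha

lemma projective_of_lift_to_degreeDisk {N : Type} [AddCommGroup N] [Module R N]
    {G : ℕ → Submodule R N} {hG : Antitone G} {hG0 : G 0 = ⊤} (f : N →ₗ[R] A.C.X i)
    (hf : ∀ k, Set.MapsTo f (G k) (A.F k i)) (l : A ⟶ filteredModuleDisk G hG hG0 (i - 1))
    (hl : l ≫ filteredModuleDiskMap f hf (i - 1) = A.toDegreeDisk i)
    (k : ℕ) [Module.Projective R (G k)] : Module.Projective R (A.F k i) := by
  let top : PLift (i = i - 1 ∨ i = i - 1 + 1) := ⟨Or.inr (by omega)⟩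
  let s : A.F k i →ₗ[R] G k := ((LinearMap.proj top).comp (l.φ.f i).hom).restrict
    fun a ha => l.preserves k i a ha top trivial
  refine .of_split s (f.restrict (hf k)) (LinearMap.ext fun a => Subtype.ext ?_)
  have := congrFun (congrArg
    (fun g : A ⟶ A.degreeDisk i => (g.φ.f i a : moduleDiskFun (A.C.X i) (i - 1) i)) hl) top
  change f (s a) = (A.toDegree i i).hom a at this
  rwa [toDegree_self] at this

abbrev freeCoverDisk : FCx R :=
  filteredModuleDisk (freeCoverFiltration (A.F · i)) (freeCoverFiltration_antitone _)
    (freeCoverFiltration_zero _) (i - 1)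

def freeCoverDiskMap : A.freeCoverDisk i ⟶ A.degreeDisk i :=
  filteredModuleDiskMap (freeCoverMap (A.F · i)) (mapsTo_freeCoverMap (A.antitone_F i)) (i - 1)

lemma fFib_freeCoverDiskMap : FFib R (A.freeCoverDiskMap i) :=
  fFib_filteredModuleDiskMap _ (mapsTo_freeCoverMap (A.antitone_F i)) surjOn_freeCoverMap _

lemma fWeq_freeCoverDiskMap : FWeq R (A.freeCoverDiskMap i) :=
  fWeq_filteredModuleDiskMap _ (mapsTo_freeCoverMap (A.antitone_F i)) _

end FCx

end

theorem statement_11 (A : FCx R) (hA : FCofibrant R A) :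
    ∀ (k : ℕ) (i : ℤ), Module.Projective R (A.F k i) := by
  intro k i
  have := hA _ (A.fFib_freeCoverDiskMap i) (A.fWeq_freeCoverDiskMap i)
  have sq : CommSq (fromFZero R _) (fromFZero R A) (A.freeCoverDiskMap i) (A.toDegreeDisk i) :=
    ⟨FHom.ext (by simp [fromFZero])⟩
  exact A.projective_of_lift_to_degreeDisk i _ _ sq.lift sq.fac_right k

end
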